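/- Let x ≥ 2 and α, C₁, C₂ > 0. Let E be a set of primes and g ∈ {ω(·,E), Ω(·,E)}. Suppose f:ℕ→ℝ_{≥0} is a multiplicative function such that ∑_{p∈E, ℓ≥2} f(p^ℓ)/p^ℓ ≤ C₁ and ∑_{p∉E, ℓ≥2} f(p^ℓ)/p^ℓ + 1_{g=Ω}·∑_{p∈E, ℓ≥2} f(p^ℓ)·α^ℓ/p^ℓ ≤ C₂. Then there exists a constant K depending only on C₂ such that ∑_{n≤x, g(n,E)=k} f(n)/n ≤ K·(M_f(x,E)+C₁)^k/k! · e^{M_f(x,E^c)} for all integers k ≥ 0 when g = ω, and for all integers 0 ≤ k ≤ α·M_f(x,E) when g = Ω. -/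

import Mathlib

open scoped Classical

noncomputable section

/-- `Ω n`: the number of prime factors of `n` counted with multiplicity. -/
def bigOmega (n : ℕ) : ℕ := n.primeFactorsList.length

/-- `ω n`: the number of distinct prime factors of `n`. -/
def smallOmega (n : ℕ) : ℕ := n.primeFactors.card

/-- `ω(n, E)`: the number of distinct prime factors of `n` lying in `E`. -/
def omegaE (E : Set ℕ) (n : ℕ) : ℕ := (n.primeFactors.filter fun p => p ∈ E).card

/-- `Ω(n, E)`: the number of pairs `(p, ℓ)` with `p ∈ E`, `ℓ ≥ 1` and `p ^ ℓ ∣ n`. -/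
def bigOmegaE (E : Set ℕ) (n : ℕ) : ℕ :=
  ∑ p ∈ n.primeFactors.filter (fun p => p ∈ E), n.factorization p

/-- The class `𝓜(A₁, A₂)` of nonnegative multiplicative functions. -/
structure MClass (A₁ : ℝ) (A₂ : ℝ → ℝ) (f : ℕ → ℝ) : Prop where
  nonneg : ∀ n, 0 ≤ f n
  map_one : f 1 = 1
  mult : ∀ m n : ℕ, Nat.Coprime m n → f (m * n) = f m * f n
  le_pow : ∀ n : ℕ, 0 < n → f n ≤ A₁ ^ bigOmega n
  le_eps : ∀ ε : ℝ, 0 < ε → ∀ n : ℕ, 0 < n → f n ≤ A₂ ε * (n : ℝ) ^ ε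

/-- The finset of primes `p ≤ x`. -/
def primesUpTo (x : ℝ) : Finset ℕ := (Finset.range (⌊x⌋₊ + 1)).filter Nat.Prime

/-- `M_f(x, E) = ∑_{p ≤ x, p ∈ E} f(p)/p`. -/
def MfE (f : ℕ → ℝ) (x : ℝ) (E : Set ℕ) : ℝ :=
  ∑ p ∈ (primesUpTo x).filter (fun p => p ∈ E), f p / p

/-- `M_f(x) = ∑_{p ≤ x} f(p)/p`. -/
def Mf (f : ℕ → ℝ) (x : ℝ) : ℝ := ∑ p ∈ primesUpTo x, f p / p

/-- `M_ν(x) = ∑_{p ≤ x} ν(p)/p`. -/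
def Mnu (ν : ℕ → ℕ) (x : ℝ) : ℝ := ∑ p ∈ primesUpTo x, (ν p : ℝ) / p

/-- The sifted set `𝒮` of positive integers `n ≤ x` with `n mod p ∉ ℰ p` for every prime `p`. -/
def sifted (x : ℝ) (ℰ : (p : ℕ) → Set (ZMod p)) : Finset ℕ :=
  (Finset.Icc 1 ⌊x⌋₊).filter fun n => ∀ p : ℕ, p.Prime → ((n : ZMod p) ∉ ℰ p)

/-- The sieve data: each `ℰ p` is a set of `ν p ≤ v` units of `ℤ/pℤ`. -/
structure SiftData (v : ℕ) (ℰ : (p : ℕ) → Set (ZMod p)) (ν : ℕ → ℕ) : Prop where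
  finite : ∀ p : ℕ, p.Prime → (ℰ p).Finite
  unit : ∀ p : ℕ, p.Prime → ∀ a ∈ ℰ p, IsUnit a
  card : ∀ p : ℕ, p.Prime → (ℰ p).ncard = ν p
  le_v : ∀ p : ℕ, p.Prime → ν p ≤ v

/-!
Put `w n = f n / n`, a nonnegative multiplicative function, and `N = ⌊x⌋`. Every `n ≤ N` factors
as `n = a b` with `a` built from primes in `E` and `b` from primes outside `E`, coprime, and
`g(n, E) = g(a)`; so the sum is at most the `a`-sum times the `b`-sum. The `b`-sum is at most the
truncated Euler product
`∏_{p ∉ E} (1 + ∑_{ℓ ≥ 1} w(p^ℓ)) ≤ exp (M_f(x, Eᶜ) + ∑_{p ∉ E, ℓ ≥ 2} w(p^ℓ))`.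

For `g = ω`, grouping the `a` by their set of prime factors bounds the `a`-sum by the `k`-th
elementary symmetric function of the `u_p = ∑_{ℓ ≥ 1} w(p^ℓ)`, which is at most
`(∑_p u_p)^k / k! ≤ (M_f(x, E) + C₁)^k / k!`.
For `g = Ω`, write `a = s c` with `s` squarefree and `c` squarefull. As `T = M_f(x, E) ≥ k / α`,
the `s` with `ω(s) = k - Ω(c)` contribute at most `T^(k - Ω c) / (k - Ω c)! ≤ α^(Ω c) T^k / k!`,
and `∑_c w(c) α^(Ω c) ≤ exp (∑_{p ∈ E, ℓ ≥ 2} w(p^ℓ) α^ℓ)`. In both cases `K = e^{C₂}` works.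
-/

open Finset ArithmeticFunction
open scoped ArithmeticFunction.Omega Nat

theorem Finset.sum_le_sum_of_injOn {ι κ M : Type*} [AddCommMonoid M] [PartialOrder M]
    [IsOrderedAddMonoid M] {s : Finset ι} {t : Finset κ} (e : ι → κ) (he : Set.MapsTo e s t)
    (he' : Set.InjOn e s) {f : ι → M} {g : κ → M} (hfg : ∀ i ∈ s, f i = g (e i))
    (hg : ∀ j ∈ t, 0 ≤ g j) : ∑ i ∈ s, f i ≤ ∑ j ∈ t, g j := by
  classical
  rw [sum_congr rfl hfg, ← sum_image he']
  exact sum_le_sum_of_subset_of_nonneg (image_subset_iff.2 he) fun j hj _ => hg j hj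

section ElementarySymmetric

variable {ι : Type*} [DecidableEq ι] {s : Finset ι} {u : ι → ℝ}

/-- Each `(k+1)`-subset arises `k+1` times as a `k`-subset together with one more element. -/
theorem succ_mul_sum_powersetCard_prod_le (hu : ∀ i ∈ s, 0 ≤ u i) (k : ℕ) :
    (k + 1) * ∑ A ∈ s.powersetCard (k + 1), ∏ i ∈ A, u i ≤
      (∑ A ∈ s.powersetCard k, ∏ i ∈ A, u i) * ∑ i ∈ s, u i := by
  have hcount : (k + 1 : ℝ) * ∑ A ∈ s.powersetCard (k + 1), ∏ i ∈ A, u i =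
      ∑ x ∈ (s.powersetCard (k + 1)).sigma id, (∏ i ∈ x.1.erase x.2, u i) * u x.2 := by
    rw [sum_sigma, mul_sum]
    refine sum_congr rfl fun A hA => ?_
    have hA : (#A : ℝ) = k + 1 := by exact_mod_cast (mem_powersetCard.1 hA).2
    simp only [id, sum_congr rfl fun i hi => prod_erase_mul A u hi, sum_const, nsmul_eq_mul, hA]
  rw [hcount, sum_mul_sum, ← sum_product']
  refine sum_le_sum_of_injOn (fun x => (x.1.erase x.2, x.2)) ?_ ?_ (fun _ _ => rfl) ?_
  · rintro ⟨A, i⟩ hx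
    simp only [mem_coe, mem_sigma, mem_powersetCard, id] at hx
    simp only [coe_product, Set.mem_prod, mem_coe, mem_powersetCard]
    refine ⟨⟨(erase_subset _ _).trans hx.1.1, ?_⟩, hx.1.1 hx.2⟩
    rw [card_erase_of_mem hx.2, hx.1.2, Nat.add_sub_cancel]
  · rintro ⟨A, i⟩ hx ⟨B, j⟩ hy h
    simp only [Prod.mk.injEq] at h
    simp only [mem_coe, mem_sigma, id] at hx hy
    obtain ⟨hAB, rfl⟩ := h
    rw [← insert_erase hx.2, ← insert_erase hy.2, hAB]
  · intro x hx
    have := mem_product.1 hx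
    exact mul_nonneg (prod_nonneg fun i hi =>
      hu i ((mem_powersetCard.1 this.1).1 hi)) (hu _ this.2)

theorem sum_powersetCard_prod_le (hu : ∀ i ∈ s, 0 ≤ u i) (k : ℕ) :
    ∑ A ∈ s.powersetCard k, ∏ i ∈ A, u i ≤ (∑ i ∈ s, u i) ^ k / k ! := by
  induction k with
  | zero => simp
  | succ k ih =>
    have hS : 0 ≤ ∑ i ∈ s, u i := sum_nonneg hu
    rw [le_div_iff₀ (by positivity)]
    calc (∑ A ∈ s.powersetCard (k + 1), ∏ i ∈ A, u i) * (k + 1)!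
        = k ! * ((k + 1) * ∑ A ∈ s.powersetCard (k + 1), ∏ i ∈ A, u i) := by
          rw [Nat.factorial_succ]; push_cast; ring
      _ ≤ k ! * ((∑ A ∈ s.powersetCard k, ∏ i ∈ A, u i) * ∑ i ∈ s, u i) := by
          exact mul_le_mul_of_nonneg_left (succ_mul_sum_powersetCard_prod_le hu k) (by positivity)
      _ = ((∑ A ∈ s.powersetCard k, ∏ i ∈ A, u i) * k !) * ∑ i ∈ s, u i := by ring
      _ ≤ (∑ i ∈ s, u i) ^ k * ∑ i ∈ s, u i := by
          gcongr; exact (le_div_iff₀ (by positivity)).1 ih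
      _ = (∑ i ∈ s, u i) ^ (k + 1) := (pow_succ _ _).symm

end ElementarySymmetric

theorem pow_sub_div_factorial_le {T α : ℝ} {k e : ℕ} (he : e ≤ k) (hT : 0 ≤ T)
    (hk : (k : ℝ) ≤ α * T) :
    T ^ (k - e) / (k - e)! ≤ α ^ e * (T ^ k / k !) := by
  have hdesc : (k.descFactorial e : ℝ) ≤ (α * T) ^ e := by
    calc (k.descFactorial e : ℝ) ≤ (k : ℝ) ^ e := by exact_mod_cast k.descFactorial_le_pow e
      _ ≤ (α * T) ^ e := by gcongr
  have hfac : ((k - e)! : ℝ) * k.descFactorial e = k ! := by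
    exact_mod_cast Nat.factorial_mul_descFactorial he
  obtain ⟨j, rfl⟩ := Nat.exists_eq_add_of_le he
  rw [Nat.add_sub_cancel_left] at hfac ⊢
  calc T ^ j / j ! = T ^ j * (e + j).descFactorial e / (e + j)! := by
        rw [← hfac]; field_simp
    _ ≤ T ^ j * (α * T) ^ e / (e + j)! := by gcongr
    _ = α ^ e * (T ^ (e + j) / (e + j)!) := by ring

namespace Nat

def factorPart (s : Set ℕ) (n : ℕ) : ℕ := (n.factorization.filter (· ∈ s)).prod (· ^ ·)

variable {s : Set ℕ} {n p : ℕ}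

theorem factorization_factorPart (s : Set ℕ) (n : ℕ) :
    (factorPart s n).factorization = n.factorization.filter (· ∈ s) :=
  prod_pow_factorization_eq_self fun _ hp => prime_of_mem_primeFactors (mem_filter.1 hp).1

theorem factorization_factorPart_of_mem (hp : p ∈ s) :
    (factorPart s n).factorization p = n.factorization p := by
  rw [factorization_factorPart, Finsupp.filter_apply_pos _ _ hp]

theorem mem_primeFactors_factorPart :
    p ∈ (factorPart s n).primeFactors ↔ p ∈ n.primeFactors ∧ p ∈ s := by
  rw [← support_factorization, factorization_factorPart, Finsupp.support_filter, mem_filter,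
    support_factorization]

theorem primeFactors_factorPart_subset (s : Set ℕ) (n : ℕ) :
    (factorPart s n).primeFactors ⊆ n.primeFactors :=
  fun _ hp => (mem_primeFactors_factorPart.1 hp).1

theorem factorPart_ne_zero (s : Set ℕ) (n : ℕ) : factorPart s n ≠ 0 :=
  Finset.prod_ne_zero_iff.2 fun _ hp =>
    pow_ne_zero _ (prime_of_mem_primeFactors (mem_filter.1 hp).1).ne_zero

theorem factorPart_mul_factorPart_compl (s : Set ℕ) (hn : n ≠ 0) :
    factorPart s n * factorPart sᶜ n = n := by
  refine eq_of_factorization_eq (mul_ne_zero (factorPart_ne_zero _ _) (factorPart_ne_zero _ _))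
    hn fun p => ?_
  rw [factorization_mul (factorPart_ne_zero _ _) (factorPart_ne_zero _ _), Finsupp.add_apply,
    factorization_factorPart, factorization_factorPart, Finsupp.filter_apply,
    Finsupp.filter_apply]
  by_cases hp : p ∈ s <;> simp [hp]

theorem coprime_factorPart_compl (s : Set ℕ) (n : ℕ) :
    (factorPart s n).Coprime (factorPart sᶜ n) := by
  refine (disjoint_primeFactors (factorPart_ne_zero _ _) (factorPart_ne_zero _ _)).1 ?_
  exact Finset.disjoint_left.2 fun _ hp hp' =>
    (mem_primeFactors_factorPart.1 hp').2 (mem_primeFactors_factorPart.1 hp).2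

theorem factorPart_le (s : Set ℕ) (hn : n ≠ 0) : factorPart s n ≤ n :=
  le_of_dvd (pos_of_ne_zero hn) ⟨_, (factorPart_mul_factorPart_compl s hn).symm⟩

theorem ne_zero_of_mem_Icc_one {N : ℕ} (hn : n ∈ Icc 1 N) : n ≠ 0 :=
  one_le_iff_ne_zero.1 (mem_Icc.1 hn).1

theorem factorPart_mem_Icc {N : ℕ} (s : Set ℕ) (hn : n ∈ Icc 1 N) : factorPart s n ∈ Icc 1 N := by
  exact mem_Icc.2 ⟨pos_of_ne_zero (factorPart_ne_zero s n),
    (factorPart_le s (ne_zero_of_mem_Icc_one hn)).trans (mem_Icc.1 hn).2⟩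

theorem factorization_mem_Icc {N : ℕ} (hn : n ∈ Icc 1 N) (hp : p ∈ n.primeFactors) :
    n.factorization p ∈ Icc 1 N := by
  exact mem_Icc.2 ⟨pos_of_ne_zero (Finsupp.mem_support_iff.1 (n.support_factorization ▸ hp)),
    (factorization_lt p (ne_zero_of_mem_Icc_one hn)).le.trans (mem_Icc.1 hn).2⟩

theorem factorization_factorPart_eq_one
    (hp : p ∈ (factorPart {q | n.factorization q = 1} n).primeFactors) :
    (factorPart {q | n.factorization q = 1} n).factorization p = 1 :=
  (factorization_factorPart_of_mem (mem_primeFactors_factorPart.1 hp).2).trans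
    (mem_primeFactors_factorPart.1 hp).2

theorem two_le_factorization_factorPart_compl
    (hp : p ∈ (factorPart {q | n.factorization q = 1}ᶜ n).primeFactors) :
    2 ≤ (factorPart {q | n.factorization q = 1}ᶜ n).factorization p := by
  obtain ⟨hpn, hp1⟩ := mem_primeFactors_factorPart.1 hp
  rw [factorization_factorPart_of_mem hp1]
  have h0 := Finsupp.mem_support_iff.1 (n.support_factorization ▸ hpn)
  have h1 : n.factorization p ≠ 1 := hp1
  omega

theorem cardFactors_eq_card_add_cardFactors (hn : n ≠ 0) :
    Ω n = #(factorPart {p | n.factorization p = 1} n).primeFactors +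
      Ω (factorPart {p | n.factorization p = 1}ᶜ n) := by
  conv_lhs => rw [← factorPart_mul_factorPart_compl {p | n.factorization p = 1} hn]
  rw [cardFactors_mul (factorPart_ne_zero _ _) (factorPart_ne_zero _ _),
    cardFactors_eq_sum_factorization (n := factorPart _ n), Finsupp.sum, support_factorization,
    card_eq_sum_ones]
  exact congrArg (· + _) (sum_congr rfl fun p hp => factorization_factorPart_eq_one hp)

end Nat

namespace ArithmeticFunction

variable {w : ArithmeticFunction ℝ}

theorem IsMultiplicative.eq_prod_of_primeFactors_subset (hw : w.IsMultiplicative) {n : ℕ}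
    (hn : n ≠ 0) {P : Finset ℕ} (hP : n.primeFactors ⊆ P) :
    w n = ∏ p ∈ P, w (p ^ n.factorization p) := by
  rw [hw.multiplicative_factorization w hn, Nat.prod_factorization_eq_prod_primeFactors]
  refine prod_subset hP fun p _ hp => ?_
  rw [Finsupp.notMem_support_iff.1 hp, pow_zero, hw.map_one]

theorem sum_le_prod_sum_pow (hw : w.IsMultiplicative) (hw₀ : ∀ n, 0 ≤ w n) {S P L : Finset ℕ}
    (hS : ∀ n ∈ S, n ≠ 0 ∧ n.primeFactors ⊆ P ∧ ∀ p ∈ P, n.factorization p ∈ L) :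
    ∑ n ∈ S, w n ≤ ∏ p ∈ P, ∑ ℓ ∈ L, w (p ^ ℓ) := by
  rw [prod_sum]
  refine sum_le_sum_of_injOn (fun n p _ => n.factorization p) ?_ ?_ ?_ ?_
  · exact fun n hn => mem_pi.2 fun p hp => (hS n hn).2.2 p hp
  · intro n hn m hm h
    obtain ⟨hn0, hnP, -⟩ := hS n hn
    obtain ⟨hm0, hmP, -⟩ := hS m hm
    refine Nat.eq_of_factorization_eq hn0 hm0 fun p => ?_
    by_cases hp : p ∈ P
    · exact congr_fun (congr_fun h p) hp
    · rw [Finsupp.notMem_support_iff.1 fun h => hp (hnP h),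
        Finsupp.notMem_support_iff.1 fun h => hp (hmP h)]
  · intro n hn
    rw [prod_attach P fun p => w (p ^ n.factorization p)]
    exact hw.eq_prod_of_primeFactors_subset (hS n hn).1 (hS n hn).2.1
  · exact fun g _ => prod_nonneg fun p _ => hw₀ _

theorem sum_le_exp_sum_pow (hw : w.IsMultiplicative) (hw₀ : ∀ n, 0 ≤ w n) {S P L : Finset ℕ}
    (hL : 0 ∉ L) (hS : ∀ n ∈ S, n ≠ 0 ∧ n.primeFactors ⊆ P ∧
      ∀ p ∈ n.primeFactors, n.factorization p ∈ L) :
    ∑ n ∈ S, w n ≤ Real.exp (∑ p ∈ P, ∑ ℓ ∈ L, w (p ^ ℓ)) := by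
  have hS' : ∀ n ∈ S, n ≠ 0 ∧ n.primeFactors ⊆ P ∧ ∀ p ∈ P, n.factorization p ∈ insert 0 L := by
    refine fun n hn => ⟨(hS n hn).1, (hS n hn).2.1, fun p _ => ?_⟩
    by_cases hp : p ∈ n.primeFactors
    · exact mem_insert_of_mem ((hS n hn).2.2 p hp)
    · exact mem_insert.2 (Or.inl (Finsupp.notMem_support_iff.1 hp))
  calc ∑ n ∈ S, w n ≤ ∏ p ∈ P, ∑ ℓ ∈ insert 0 L, w (p ^ ℓ) := sum_le_prod_sum_pow hw hw₀ hS'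
    _ = ∏ p ∈ P, (1 + ∑ ℓ ∈ L, w (p ^ ℓ)) := by simp only [sum_insert hL, pow_zero, hw.map_one]
    _ ≤ Real.exp (∑ p ∈ P, ∑ ℓ ∈ L, w (p ^ ℓ)) :=
      Real.prod_one_add_le_exp_sum P fun p => sum_nonneg fun ℓ _ => hw₀ _

theorem sum_le_pow_div_factorial (hw : w.IsMultiplicative) (hw₀ : ∀ n, 0 ≤ w n)
    {S Q L : Finset ℕ} {k : ℕ} (hS : ∀ n ∈ S, n ≠ 0 ∧ n.primeFactors ⊆ Q ∧
      #n.primeFactors = k ∧ ∀ p ∈ n.primeFactors, n.factorization p ∈ L) :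
    ∑ n ∈ S, w n ≤ (∑ p ∈ Q, ∑ ℓ ∈ L, w (p ^ ℓ)) ^ k / k ! := by
  have hmaps : ∀ n ∈ S, n.primeFactors ∈ Q.powersetCard k :=
    fun n hn => mem_powersetCard.2 ⟨(hS n hn).2.1, (hS n hn).2.2.1⟩
  rw [← sum_fiberwise_of_maps_to hmaps]
  calc ∑ A ∈ Q.powersetCard k, ∑ n ∈ S with n.primeFactors = A, w n
      ≤ ∑ A ∈ Q.powersetCard k, ∏ p ∈ A, ∑ ℓ ∈ L, w (p ^ ℓ) := by
        refine sum_le_sum fun A _ => sum_le_prod_sum_pow hw hw₀ fun n hn => ?_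
        obtain ⟨hnS, rfl⟩ := mem_filter.1 hn
        exact ⟨(hS n hnS).1, subset_rfl, (hS n hnS).2.2.2⟩
    _ ≤ _ := sum_powersetCard_prod_le (fun p _ => sum_nonneg fun ℓ _ => hw₀ _) k

theorem sum_le_sum_mul_sum_of_coprime (hw : w.IsMultiplicative) (hw₀ : ∀ n, 0 ≤ w n)
    {S B : Finset ℕ} {A : ℕ → Finset ℕ} (a b : ℕ → ℕ)
    (h : ∀ n ∈ S, a n * b n = n ∧ (a n).Coprime (b n) ∧ b n ∈ B ∧ a n ∈ A (b n)) :
    ∑ n ∈ S, w n ≤ ∑ m ∈ B, w m * ∑ l ∈ A m, w l := by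
  simp_rw [mul_sum]
  rw [sum_sigma']
  refine sum_le_sum_of_injOn (fun n => (⟨b n, a n⟩ : Σ _ : ℕ, ℕ)) ?_ ?_ ?_ ?_
  · exact fun n hn => mem_sigma.2 ⟨(h n hn).2.2.1, (h n hn).2.2.2⟩
  · intro n hn m hm hnm
    obtain ⟨hb, ha⟩ := Sigma.mk.inj_iff.1 hnm
    rw [← (h n hn).1, ← (h m hm).1, hb, eq_of_heq ha]
  · intro n hn
    conv_lhs => rw [← (h n hn).1]
    rw [hw.map_mul_of_coprime (h n hn).2.1, mul_comm]
  · exact fun x _ => mul_nonneg (hw₀ _) (hw₀ _)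

def mulPowCardFactors (w : ArithmeticFunction ℝ) (α : ℝ) : ArithmeticFunction ℝ :=
  ⟨fun n => w n * α ^ Ω n, by simp⟩

theorem mulPowCardFactors_apply (α : ℝ) (n : ℕ) : w.mulPowCardFactors α n = w n * α ^ Ω n := rfl

theorem IsMultiplicative.mulPowCardFactors (hw : w.IsMultiplicative) (α : ℝ) :
    (w.mulPowCardFactors α).IsMultiplicative := by
  refine IsMultiplicative.iff_ne_zero.2 ⟨by simp [mulPowCardFactors_apply, hw.map_one],
    fun hm hn hmn => ?_⟩
  simp only [mulPowCardFactors_apply, cardFactors_mul hm hn, hw.map_mul_of_coprime hmn, pow_add]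
  ring

theorem sum_squarefree_card_primeFactors_eq_le (hw : w.IsMultiplicative) (hw₀ : ∀ n, 0 ≤ w n)
    {α : ℝ} (hα : 0 ≤ α) {Q : Finset ℕ} {N k e : ℕ} (hk : (k : ℝ) ≤ α * ∑ p ∈ Q, w p) :
    ∑ n ∈ Icc 1 N with n.primeFactors ⊆ Q ∧ e ≤ k ∧ #n.primeFactors = k - e ∧
        ∀ p ∈ n.primeFactors, n.factorization p ∈ ({1} : Finset ℕ), w n ≤
      α ^ e * ((∑ p ∈ Q, w p) ^ k / k !) := by
  have hT : 0 ≤ ∑ p ∈ Q, w p := sum_nonneg fun p _ => hw₀ p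
  by_cases he : e ≤ k
  · calc _ ≤ (∑ p ∈ Q, ∑ ℓ ∈ ({1} : Finset ℕ), w (p ^ ℓ)) ^ (k - e) / (k - e)! :=
          sum_le_pow_div_factorial hw hw₀ fun n hn => by
            obtain ⟨hnN, hnQ, -, hcard, hexp⟩ := mem_filter.1 hn
            exact ⟨Nat.ne_zero_of_mem_Icc_one hnN, hnQ, hcard, hexp⟩
      _ = (∑ p ∈ Q, w p) ^ (k - e) / (k - e)! := by simp only [sum_singleton, pow_one]
      _ ≤ α ^ e * ((∑ p ∈ Q, w p) ^ k / k !) := pow_sub_div_factorial_le he hT hk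
  · rw [filter_false_of_mem fun n _ h => he h.2.1, sum_empty]
    exact mul_nonneg (pow_nonneg hα _) (div_nonneg (pow_nonneg hT k) (by positivity))

theorem sum_cardFactors_eq_le (hw : w.IsMultiplicative) (hw₀ : ∀ n, 0 ≤ w n) {α : ℝ}
    (hα : 0 ≤ α) {Q : Finset ℕ} (hQ : ∀ p ∈ Q, p.Prime) {N k : ℕ}
    (hk : (k : ℝ) ≤ α * ∑ p ∈ Q, w p) :
    ∑ n ∈ Icc 1 N with n.primeFactors ⊆ Q ∧ Ω n = k, w n ≤
      Real.exp (∑ p ∈ Q, ∑ ℓ ∈ Icc 2 N, w (p ^ ℓ) * α ^ ℓ) * ((∑ p ∈ Q, w p) ^ k / k !) := by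
  set T := ∑ p ∈ Q, w p
  have hT : 0 ≤ T := sum_nonneg fun p _ => hw₀ p
  set B := {m ∈ Icc 1 N | m.primeFactors ⊆ Q ∧ ∀ p ∈ m.primeFactors, m.factorization p ∈ Icc 2 N}
  set A := fun m => {l ∈ Icc 1 N | l.primeFactors ⊆ Q ∧ Ω m ≤ k ∧ #l.primeFactors = k - Ω m ∧
    ∀ p ∈ l.primeFactors, l.factorization p ∈ ({1} : Finset ℕ)}
  have hsplit : ∑ n ∈ Icc 1 N with n.primeFactors ⊆ Q ∧ Ω n = k, w n ≤
      ∑ m ∈ B, w m * ∑ l ∈ A m, w l := by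
    refine sum_le_sum_mul_sum_of_coprime hw hw₀
      (fun n => Nat.factorPart {p | n.factorization p = 1} n)
      (fun n => Nat.factorPart {p | n.factorization p = 1}ᶜ n) fun n hn => ?_
    obtain ⟨hnN, hnQ, hnk⟩ := mem_filter.1 hn
    have hn0 : n ≠ 0 := Nat.ne_zero_of_mem_Icc_one hnN
    have hΩ := Nat.cardFactors_eq_card_add_cardFactors hn0
    have hpart : ∀ s : Set ℕ,
        Nat.factorPart s n ∈ Icc 1 N ∧ (Nat.factorPart s n).primeFactors ⊆ Q := fun s =>
      ⟨Nat.factorPart_mem_Icc s hnN, (Nat.primeFactors_factorPart_subset s n).trans hnQ⟩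
    refine ⟨Nat.factorPart_mul_factorPart_compl _ hn0, Nat.coprime_factorPart_compl _ n,
      mem_filter.2 ⟨(hpart _).1, (hpart _).2, fun p hp => mem_Icc.2
        ⟨Nat.two_le_factorization_factorPart_compl hp,
          (mem_Icc.1 (Nat.factorization_mem_Icc (hpart _).1 hp)).2⟩⟩,
      mem_filter.2 ⟨(hpart _).1, (hpart _).2, by omega, by omega,
        fun p hp => mem_singleton.2 (Nat.factorization_factorPart_eq_one hp)⟩⟩
  have hw' := hw.mulPowCardFactors α
  have hw'₀ : ∀ n, 0 ≤ w.mulPowCardFactors α n := fun n => mul_nonneg (hw₀ n) (pow_nonneg hα _)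
  calc ∑ n ∈ Icc 1 N with n.primeFactors ⊆ Q ∧ Ω n = k, w n
      ≤ ∑ m ∈ B, w m * (α ^ Ω m * (T ^ k / k !)) :=
        hsplit.trans (sum_le_sum fun m _ => mul_le_mul_of_nonneg_left
          (sum_squarefree_card_primeFactors_eq_le (N := N) (e := Ω m) hw hw₀ hα hk) (hw₀ m))
    _ = (∑ m ∈ B, w.mulPowCardFactors α m) * (T ^ k / k !) := by
        rw [sum_mul]; simp only [mulPowCardFactors_apply, mul_assoc]
    _ ≤ Real.exp (∑ p ∈ Q, ∑ ℓ ∈ Icc 2 N, w.mulPowCardFactors α (p ^ ℓ)) * (T ^ k / k !) := by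
        gcongr
        exact sum_le_exp_sum_pow hw' hw'₀ (by simp : 0 ∉ Icc 2 N) fun m hm => by
          obtain ⟨hmN, hmQ, hexp⟩ := mem_filter.1 hm
          exact ⟨Nat.ne_zero_of_mem_Icc_one hmN, hmQ, hexp⟩
    _ = _ := by
        congr 2
        refine sum_congr rfl fun p hp => sum_congr rfl fun ℓ _ => ?_
        rw [mulPowCardFactors_apply, cardFactors_apply_prime_pow (hQ p hp)]

end ArithmeticFunction

def primesUpToIn (x : ℝ) (E : Set ℕ) : Finset ℕ := {p ∈ primesUpTo x | p ∈ E}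

theorem mem_primesUpTo {x : ℝ} {p : ℕ} : p ∈ primesUpTo x ↔ p.Prime ∧ p ≤ ⌊x⌋₊ := by
  rw [primesUpTo, mem_filter, mem_range, Nat.lt_succ_iff, and_comm]

theorem prime_of_mem_primesUpToIn {x : ℝ} {E : Set ℕ} {p : ℕ} (hp : p ∈ primesUpToIn x E) :
    p.Prime :=
  (mem_primesUpTo.1 (mem_filter.1 hp).1).1

theorem primeFactors_subset_primesUpTo {x : ℝ} {n : ℕ} (hn : n ∈ Icc 1 ⌊x⌋₊) :
    n.primeFactors ⊆ primesUpTo x := fun _ hp =>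
  mem_primesUpTo.2 ⟨Nat.prime_of_mem_primeFactors hp,
    (Nat.le_of_mem_primeFactors hp).trans (mem_Icc.1 hn).2⟩

theorem primesUpToIn_eq_filter (x : ℝ) (E : Set ℕ) :
    primesUpToIn x E = {p ∈ range (⌊x⌋₊ + 1) | p.Prime ∧ p ∈ E} := by
  ext p; simp [primesUpToIn, primesUpTo, and_assoc]

theorem omegaE_eq_card_primeFactors_factorPart (E : Set ℕ) (n : ℕ) :
    omegaE E n = #(Nat.factorPart E n).primeFactors := by
  rw [omegaE]
  congr 1
  ext p
  rw [mem_filter, Nat.mem_primeFactors_factorPart]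

theorem bigOmegaE_eq_cardFactors_factorPart (E : Set ℕ) (n : ℕ) :
    bigOmegaE E n = Ω (Nat.factorPart E n) := by
  rw [bigOmegaE, cardFactors_eq_sum_factorization, Finsupp.sum, Nat.support_factorization]
  refine sum_congr (ext fun p => by rw [mem_filter, Nat.mem_primeFactors_factorPart])
    fun p hp => ?_
  exact (Nat.factorization_factorPart_of_mem (Nat.mem_primeFactors_factorPart.1 hp).2).symm

-- `primeSum (harmonicWeight f) x E` is `MfE f x E` by definition.
def primeSum (w : ArithmeticFunction ℝ) (x : ℝ) (E : Set ℕ) : ℝ := ∑ p ∈ primesUpToIn x E, w p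

def primePowerSum (w : ArithmeticFunction ℝ) (x : ℝ) (E : Set ℕ) : ℝ :=
  ∑ p ∈ primesUpToIn x E, ∑ ℓ ∈ Icc 2 ⌊x⌋₊, w (p ^ ℓ)

namespace ArithmeticFunction

variable {w : ArithmeticFunction ℝ}

theorem primeSum_nonneg (hw₀ : ∀ n, 0 ≤ w n) (x : ℝ) (E : Set ℕ) : 0 ≤ primeSum w x E :=
  sum_nonneg fun p _ => hw₀ p

theorem primePowerSum_nonneg (hw₀ : ∀ n, 0 ≤ w n) (x : ℝ) (E : Set ℕ) :
    0 ≤ primePowerSum w x E :=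
  sum_nonneg fun _ _ => sum_nonneg fun _ _ => hw₀ _

theorem sum_sum_Icc_one_pow_eq {x : ℝ} (hx : 1 ≤ x) (E : Set ℕ) :
    ∑ p ∈ primesUpToIn x E, ∑ ℓ ∈ Icc 1 ⌊x⌋₊, w (p ^ ℓ) = primeSum w x E + primePowerSum w x E := by
  rw [primeSum, primePowerSum, ← sum_add_distrib]
  refine sum_congr rfl fun p _ => ?_
  rw [← insert_Icc_add_one_left_eq_Icc (Nat.one_le_floor_iff x |>.2 hx), sum_insert (by simp),
    pow_one]
  rfl

theorem sum_le_sum_mul_sum_factorPart (hw : w.IsMultiplicative) (hw₀ : ∀ n, 0 ≤ w n)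
    (E : Set ℕ) (x : ℝ) (G : ℕ → ℕ) (k : ℕ) :
    ∑ n ∈ Icc 1 ⌊x⌋₊ with G (Nat.factorPart E n) = k, w n ≤
      (∑ a ∈ Icc 1 ⌊x⌋₊ with a.primeFactors ⊆ primesUpToIn x E ∧ G a = k, w a) *
        ∑ b ∈ Icc 1 ⌊x⌋₊ with b.primeFactors ⊆ primesUpToIn x Eᶜ, w b := by
  rw [mul_comm, sum_mul]
  refine sum_le_sum_mul_sum_of_coprime hw hw₀ (Nat.factorPart E) (Nat.factorPart Eᶜ)
    fun n hn => ?_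
  obtain ⟨hnN, hk⟩ := mem_filter.1 hn
  have hn0 : n ≠ 0 := Nat.ne_zero_of_mem_Icc_one hnN
  have hpart : ∀ s : Set ℕ, Nat.factorPart s n ∈ Icc 1 ⌊x⌋₊ ∧
      (Nat.factorPart s n).primeFactors ⊆ primesUpToIn x s := fun s =>
    ⟨Nat.factorPart_mem_Icc s hnN, fun p hp => mem_filter.2
      ⟨primeFactors_subset_primesUpTo hnN (Nat.mem_primeFactors_factorPart.1 hp).1,
        (Nat.mem_primeFactors_factorPart.1 hp).2⟩⟩
  exact ⟨Nat.factorPart_mul_factorPart_compl E hn0, Nat.coprime_factorPart_compl E n,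
    mem_filter.2 (hpart Eᶜ), mem_filter.2 ⟨(hpart E).1, (hpart E).2, hk⟩⟩

theorem sum_primeFactors_subset_le_exp (hw : w.IsMultiplicative) (hw₀ : ∀ n, 0 ≤ w n) {x : ℝ}
    (hx : 1 ≤ x) (E : Set ℕ) :
    ∑ n ∈ Icc 1 ⌊x⌋₊ with n.primeFactors ⊆ primesUpToIn x E, w n ≤
      Real.exp (primeSum w x E + primePowerSum w x E) := by
  rw [← sum_sum_Icc_one_pow_eq hx]
  exact sum_le_exp_sum_pow hw hw₀ (by simp) fun n hn => by
    obtain ⟨hnN, hnP⟩ := mem_filter.1 hn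
    exact ⟨Nat.ne_zero_of_mem_Icc_one hnN, hnP, fun p hp => Nat.factorization_mem_Icc hnN hp⟩

theorem sum_omegaE_eq_le (hw : w.IsMultiplicative) (hw₀ : ∀ n, 0 ≤ w n) {x : ℝ} (hx : 1 ≤ x)
    (E : Set ℕ) (k : ℕ) {C₁ C₂ : ℝ} (hC₁ : primePowerSum w x E ≤ C₁)
    (hC₂ : primePowerSum w x Eᶜ ≤ C₂) :
    ∑ n ∈ Icc 1 ⌊x⌋₊ with omegaE E n = k, w n ≤
      Real.exp C₂ * (primeSum w x E + C₁) ^ k / k ! * Real.exp (primeSum w x Eᶜ) := by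
  have hX : 0 ≤ primeSum w x E + primePowerSum w x E :=
    add_nonneg (primeSum_nonneg hw₀ x E) (primePowerSum_nonneg hw₀ x E)
  have ha : ∑ a ∈ Icc 1 ⌊x⌋₊ with a.primeFactors ⊆ primesUpToIn x E ∧ #a.primeFactors = k, w a ≤
      (primeSum w x E + primePowerSum w x E) ^ k / k ! := by
    rw [← sum_sum_Icc_one_pow_eq hx]
    exact sum_le_pow_div_factorial hw hw₀ fun n hn => by
      obtain ⟨hnN, hnQ, hk⟩ := mem_filter.1 hn
      exact ⟨Nat.ne_zero_of_mem_Icc_one hnN, hnQ, hk,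
        fun p hp => Nat.factorization_mem_Icc hnN hp⟩
  simp only [omegaE_eq_card_primeFactors_factorPart]
  calc _ ≤ (primeSum w x E + primePowerSum w x E) ^ k / k ! *
          Real.exp (primeSum w x Eᶜ + primePowerSum w x Eᶜ) :=
        (sum_le_sum_mul_sum_factorPart hw hw₀ E x _ k).trans
          (mul_le_mul ha (sum_primeFactors_subset_le_exp hw hw₀ hx Eᶜ)
            (sum_nonneg fun b _ => hw₀ b) (by positivity))
    _ = Real.exp (primePowerSum w x Eᶜ) * (primeSum w x E + primePowerSum w x E) ^ k / k ! *
          Real.exp (primeSum w x Eᶜ) := by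
        rw [Real.exp_add]; ring
    _ ≤ _ := by gcongr

theorem sum_bigOmegaE_eq_le (hw : w.IsMultiplicative) (hw₀ : ∀ n, 0 ≤ w n) {x : ℝ} (hx : 1 ≤ x)
    (E : Set ℕ) {α : ℝ} (hα : 0 ≤ α) {k : ℕ} (hk : (k : ℝ) ≤ α * primeSum w x E) {C₁ C₂ : ℝ}
    (hC₁ : primePowerSum w x E ≤ C₁)
    (hC₂ : primePowerSum w x Eᶜ +
      ∑ p ∈ primesUpToIn x E, ∑ ℓ ∈ Icc 2 ⌊x⌋₊, w (p ^ ℓ) * α ^ ℓ ≤ C₂) :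
    ∑ n ∈ Icc 1 ⌊x⌋₊ with bigOmegaE E n = k, w n ≤
      Real.exp C₂ * (primeSum w x E + C₁) ^ k / k ! * Real.exp (primeSum w x Eᶜ) := by
  set Rα := ∑ p ∈ primesUpToIn x E, ∑ ℓ ∈ Icc 2 ⌊x⌋₊, w (p ^ ℓ) * α ^ ℓ
  have hS := primeSum_nonneg hw₀ x E
  simp only [bigOmegaE_eq_cardFactors_factorPart]
  calc _ ≤ Real.exp Rα * (primeSum w x E ^ k / k !) *
          Real.exp (primeSum w x Eᶜ + primePowerSum w x Eᶜ) :=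
        (sum_le_sum_mul_sum_factorPart hw hw₀ E x _ k).trans
          (mul_le_mul (sum_cardFactors_eq_le hw hw₀ hα
            (fun _ hp => prime_of_mem_primesUpToIn hp) hk)
            (sum_primeFactors_subset_le_exp hw hw₀ hx Eᶜ) (sum_nonneg fun b _ => hw₀ b)
            (by positivity))
    _ = Real.exp (primePowerSum w x Eᶜ + Rα) * primeSum w x E ^ k / k ! *
          Real.exp (primeSum w x Eᶜ) := by
        rw [Real.exp_add, Real.exp_add]; ring
    _ ≤ _ := by gcongr; linarith [primePowerSum_nonneg hw₀ x E]

end ArithmeticFunction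

def harmonicWeight (f : ℕ → ℝ) : ArithmeticFunction ℝ := ⟨fun n => f n / n, by simp⟩

theorem harmonicWeight_apply (f : ℕ → ℝ) (n : ℕ) : harmonicWeight f n = f n / n := rfl

theorem harmonicWeight_pow (f : ℕ → ℝ) (p ℓ : ℕ) :
    harmonicWeight f (p ^ ℓ) = f (p ^ ℓ) / (p : ℝ) ^ ℓ := by
  rw [harmonicWeight_apply, Nat.cast_pow]

theorem isMultiplicative_harmonicWeight {f : ℕ → ℝ} (hf₁ : f 1 = 1)
    (hfm : ∀ m n : ℕ, Nat.Coprime m n → f (m * n) = f m * f n) :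
    (harmonicWeight f).IsMultiplicative :=
  ⟨by simp [harmonicWeight_apply, hf₁], fun {m n} hmn => by
    simp only [harmonicWeight_apply, hfm m n hmn, Nat.cast_mul, div_mul_div_comm]⟩

theorem hardy_ramanujan_harmonic_general (α C₁ C₂ : ℝ) (hα : 0 < α) :
    ∃ K > 0,
      ∀ (x : ℝ) (E : Set ℕ) (f : ℕ → ℝ),
        2 ≤ x → (∀ n, 0 ≤ f n) → f 1 = 1 →
        (∀ m n : ℕ, Nat.Coprime m n → f (m * n) = f m * f n) →
        (∀ P L : ℕ, ∑ p ∈ (Finset.range P).filter (fun p => p.Prime ∧ p ∈ E),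
            ∑ ℓ ∈ Finset.Icc 2 L, f (p ^ ℓ) / (p : ℝ) ^ ℓ ≤ C₁) →
        ((∀ P L : ℕ, ∑ p ∈ (Finset.range P).filter (fun p => p.Prime ∧ p ∉ E),
              ∑ ℓ ∈ Finset.Icc 2 L, f (p ^ ℓ) / (p : ℝ) ^ ℓ ≤ C₂) →
          ∀ k : ℕ,
            ∑ n ∈ (Finset.Icc 1 ⌊x⌋₊).filter (fun n => omegaE E n = k), f n / n ≤
              K * (MfE f x E + C₁) ^ k / (k.factorial : ℝ) * Real.exp (MfE f x Eᶜ)) ∧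
        ((∀ P L : ℕ,
            (∑ p ∈ (Finset.range P).filter (fun p => p.Prime ∧ p ∉ E),
                ∑ ℓ ∈ Finset.Icc 2 L, f (p ^ ℓ) / (p : ℝ) ^ ℓ) +
              (∑ p ∈ (Finset.range P).filter (fun p => p.Prime ∧ p ∈ E),
                ∑ ℓ ∈ Finset.Icc 2 L, f (p ^ ℓ) * α ^ ℓ / (p : ℝ) ^ ℓ) ≤ C₂) →
          ∀ k : ℕ, (k : ℝ) ≤ α * MfE f x E →
            ∑ n ∈ (Finset.Icc 1 ⌊x⌋₊).filter (fun n => bigOmegaE E n = k), f n / n ≤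
              K * (MfE f x E + C₁) ^ k / (k.factorial : ℝ) * Real.exp (MfE f x Eᶜ)) := by
  refine ⟨Real.exp C₂, Real.exp_pos _, fun x E f hx hf₀ hf₁ hfm hC₁ => ?_⟩
  have hw := isMultiplicative_harmonicWeight hf₁ hfm
  have hw₀ : ∀ n, 0 ≤ harmonicWeight f n := fun n => div_nonneg (hf₀ n) n.cast_nonneg
  have hx₁ : (1 : ℝ) ≤ x := by linarith
  have hR₁ : primePowerSum (harmonicWeight f) x E ≤ C₁ := by
    simpa only [primePowerSum, primesUpToIn_eq_filter, harmonicWeight_pow]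
      using hC₁ (⌊x⌋₊ + 1) ⌊x⌋₊
  refine ⟨fun hC₂ k => sum_omegaE_eq_le hw hw₀ hx₁ E k hR₁ ?_,
    fun hC₂ k hk => sum_bigOmegaE_eq_le hw hw₀ hx₁ E hα.le hk hR₁ ?_⟩
  · simpa only [primePowerSum, primesUpToIn_eq_filter, Set.mem_compl_iff, harmonicWeight_pow]
      using hC₂ (⌊x⌋₊ + 1) ⌊x⌋₊
  · simpa only [primePowerSum, primesUpToIn_eq_filter, Set.mem_compl_iff, harmonicWeight_pow,
      div_mul_eq_mul_div] using hC₂ (⌊x⌋₊ + 1) ⌊x⌋₊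

/-- **Lemma 2.2 (Hardy–Ramanujan inequality with harmonic weights).**
Under the stated hypotheses on the prime power values of `f`,
`∑_{n ≤ x, g(n,E) = k} f(n)/n ≪_{C₂} (M_f(x,E) + C₁)^k / k! · e^{M_f(x,Eᶜ)}`
for all `k ≥ 0` when `g = ω`, and for `0 ≤ k ≤ α M_f(x,E)` when `g = Ω`. -/
theorem hardy_ramanujan_harmonic (α C₁ C₂ : ℝ) (hα : 0 < α) (hC₁ : 0 < C₁)
    (hC₂ : 0 < C₂) :
    ∃ K > 0,
      ∀ (x : ℝ) (E : Set ℕ) (f : ℕ → ℝ),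
        2 ≤ x → (∀ n, 0 ≤ f n) → f 1 = 1 →
        (∀ m n : ℕ, Nat.Coprime m n → f (m * n) = f m * f n) →
        (∀ P L : ℕ, ∑ p ∈ (Finset.range P).filter (fun p => p.Prime ∧ p ∈ E),
            ∑ ℓ ∈ Finset.Icc 2 L, f (p ^ ℓ) / (p : ℝ) ^ ℓ ≤ C₁) →
        ((∀ P L : ℕ, ∑ p ∈ (Finset.range P).filter (fun p => p.Prime ∧ p ∉ E),
              ∑ ℓ ∈ Finset.Icc 2 L, f (p ^ ℓ) / (p : ℝ) ^ ℓ ≤ C₂) →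
          ∀ k : ℕ,
            ∑ n ∈ (Finset.Icc 1 ⌊x⌋₊).filter (fun n => omegaE E n = k), f n / n ≤
              K * (MfE f x E + C₁) ^ k / (k.factorial : ℝ) * Real.exp (MfE f x Eᶜ)) ∧
        ((∀ P L : ℕ,
            (∑ p ∈ (Finset.range P).filter (fun p => p.Prime ∧ p ∉ E),
                ∑ ℓ ∈ Finset.Icc 2 L, f (p ^ ℓ) / (p : ℝ) ^ ℓ) +
              (∑ p ∈ (Finset.range P).filter (fun p => p.Prime ∧ p ∈ E),
                ∑ ℓ ∈ Finset.Icc 2 L, f (p ^ ℓ) * α ^ ℓ / (p : ℝ) ^ ℓ) ≤ C₂) →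
          ∀ k : ℕ, (k : ℝ) ≤ α * MfE f x E →
            ∑ n ∈ (Finset.Icc 1 ⌊x⌋₊).filter (fun n => bigOmegaE E n = k), f n / n ≤
              K * (MfE f x E + C₁) ^ k / (k.factorial : ℝ) * Real.exp (MfE f x Eᶜ)) :=
  hardy_ramanujan_harmonic_general α C₁ C₂ hα

end
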